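/- The first positive isospectral Ablowitz–Ladik flow and the zeroth non-isospectral flow satisfy ⟦K¹, σ⁰⟧(u)(n) = K¹(u)(n) for every u and every n ∈ ℤ; that is, (K¹)′(u)[σ⁰(u)](n) − (σ⁰)′(u)[K¹(u)](n) = K¹(u)(n), where both Gateaux derivatives exist. -/

import Mathlib

/-!
`σ⁰` is linear, so `(σ⁰)′(u)[K¹(u)] = σ⁰(K¹(u))`. It scales `Q, R` at site `n` by `±(2n + 1/2)`
and `S, T` by `±(2n + 3/2)`, so it leaves the products `Q R` and `S T` invariant to first order.
Hence `(K¹)′(u)[σ⁰(u)]` only sees the weight of the linear factor of each component of `K¹`, and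
that weight exceeds the one `σ⁰` attaches to the component itself by exactly `1`
(e.g. `(2n + 3/2) - (2n + 1/2)` for `(1 - Q R) S`).
-/

/-- A quadruple of real sequences `u = (Q, R, S, T)`. -/
abbrev ALQuad : Type := (ℤ → ℝ) × (ℤ → ℝ) × (ℤ → ℝ) × (ℤ → ℝ)

/-- Evaluation of a quadruple of sequences at `n`, as a vector in `ℝ⁴`. -/
def evalQ (u : ALQuad) (n : ℤ) : ℝ × ℝ × ℝ × ℝ :=
  (u.1 n, u.2.1 n, u.2.2.1 n, u.2.2.2 n)

/-- The zeroth isospectral four-potential Ablowitz–Ladik flow `K⁰`. -/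
def K0 (u : ALQuad) : ALQuad :=
  (fun n => u.1 n, fun n => -u.2.1 n, fun n => u.2.2.1 n, fun n => -u.2.2.2 n)

/-- The first positive isospectral four-potential Ablowitz–Ladik flow `K¹`. -/
def K1 (u : ALQuad) : ALQuad :=
  (fun n => (1 - u.1 n * u.2.1 n) * u.2.2.1 n,
   fun n => -((1 - u.1 n * u.2.1 n) * u.2.2.2 (n - 1)),
   fun n => (1 - u.2.2.1 n * u.2.2.2 n) * u.1 (n + 1),
   fun n => -((1 - u.2.2.1 n * u.2.2.2 n) * u.2.1 n))

/-- The first negative isospectral four-potential Ablowitz–Ladik flow `K⁻¹`. -/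
def Kneg1 (u : ALQuad) : ALQuad :=
  (fun n => (1 - u.1 n * u.2.1 n) * u.2.2.1 (n - 1),
   fun n => -((1 - u.1 n * u.2.1 n) * u.2.2.2 n),
   fun n => (1 - u.2.2.1 n * u.2.2.2 n) * u.1 n,
   fun n => -((1 - u.2.2.1 n * u.2.2.2 n) * u.2.1 (n + 1)))

/-- The zeroth non-isospectral four-potential Ablowitz–Ladik flow `σ⁰`. -/
noncomputable def sigma0 (u : ALQuad) : ALQuad :=
  (fun n => (2 * (n : ℝ) + 1 / 2) * u.1 n,
   fun n => -((2 * (n : ℝ) + 1 / 2) * u.2.1 n),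
   fun n => (2 * (n : ℝ) + 3 / 2) * u.2.2.1 n,
   fun n => -((2 * (n : ℝ) + 3 / 2) * u.2.2.2 n))

lemma evalQ_add_smul (u v : ALQuad) (ε : ℝ) (n : ℤ) :
    evalQ (u + ε • v) n = evalQ u n + ε • evalQ v n := rfl

lemma evalQ_sub (u v : ALQuad) (n : ℤ) : evalQ (u - v) n = evalQ u n - evalQ v n := rfl

def K1Deriv (u v : ALQuad) : ALQuad :=
  (fun n => -(v.1 n * u.2.1 n + u.1 n * v.2.1 n) * u.2.2.1 n
      + (1 - u.1 n * u.2.1 n) * v.2.2.1 n,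
   fun n => -(-(v.1 n * u.2.1 n + u.1 n * v.2.1 n) * u.2.2.2 (n - 1)
      + (1 - u.1 n * u.2.1 n) * v.2.2.2 (n - 1)),
   fun n => -(v.2.2.1 n * u.2.2.2 n + u.2.2.1 n * v.2.2.2 n) * u.1 (n + 1)
      + (1 - u.2.2.1 n * u.2.2.2 n) * v.1 (n + 1),
   fun n => -(-(v.2.2.1 n * u.2.2.2 n + u.2.2.1 n * v.2.2.2 n) * u.2.1 n
      + (1 - u.2.2.1 n * u.2.2.2 n) * v.2.1 n))

lemma hasDerivAt_one_sub_mul_mul (q r s a b c : ℝ) :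
    HasDerivAt (fun ε : ℝ => (1 - (q + ε * a) * (r + ε * b)) * (s + ε * c))
      (-(a * r + q * b) * s + (1 - q * r) * c) 0 := by
  have hline (p d : ℝ) : HasDerivAt (fun ε : ℝ => p + ε * d) d 0 := by
    simpa using ((hasDerivAt_id (0 : ℝ)).mul_const d).const_add p
  simpa using (((hline q a).fun_mul (hline r b)).const_sub 1).fun_mul (hline s c)

lemma hasDerivAt_evalQ_K1 (u v : ALQuad) (n : ℤ) :
    HasDerivAt (fun ε : ℝ => evalQ (K1 (u + ε • v)) n) (evalQ (K1Deriv u v) n) 0 := by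
  simp only [evalQ, K1, K1Deriv, Prod.fst_add, Prod.snd_add, Prod.smul_fst, Prod.smul_snd,
    Pi.add_apply, Pi.smul_apply, smul_eq_mul]
  exact (hasDerivAt_one_sub_mul_mul ..).prodMk ((hasDerivAt_one_sub_mul_mul ..).neg.prodMk
    ((hasDerivAt_one_sub_mul_mul ..).prodMk (hasDerivAt_one_sub_mul_mul ..).neg))

lemma sigma0_add_smul (u v : ALQuad) (ε : ℝ) :
    sigma0 (u + ε • v) = sigma0 u + ε • sigma0 v := by
  ext n <;> simp only [sigma0, Prod.fst_add, Prod.snd_add, Prod.smul_fst, Prod.smul_snd,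
    Pi.add_apply, Pi.smul_apply, smul_eq_mul] <;> ring

lemma hasDerivAt_evalQ_sigma0 (u v : ALQuad) (n : ℤ) :
    HasDerivAt (fun ε : ℝ => evalQ (sigma0 (u + ε • v)) n) (evalQ (sigma0 v) n) 0 := by
  simp only [sigma0_add_smul, evalQ_add_smul]
  simpa using ((hasDerivAt_id (0 : ℝ)).smul_const (evalQ (sigma0 v) n)).const_add
    (evalQ (sigma0 u) n)

lemma K1Deriv_sigma0_sub_sigma0_K1 (u : ALQuad) :
    K1Deriv u (sigma0 u) - sigma0 (K1 u) = K1 u := by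
  ext n <;> simp only [K1Deriv, sigma0, K1, Prod.fst_sub, Prod.snd_sub, Pi.sub_apply,
    Int.cast_sub, Int.cast_add, Int.cast_one] <;> ring

/-- `⟦K¹, σ⁰⟧(u)(n) = K¹(u)(n)`: both Gateaux derivatives `(K¹)′(u)[σ⁰(u)](n)` and
`(σ⁰)′(u)[K¹(u)](n)` exist, and their difference equals `K¹(u)(n)`. -/
theorem AL_bracket_K1_sigma0 (u : ALQuad) (n : ℤ) :
    ∃ d₁ d₂ : ℝ × ℝ × ℝ × ℝ,
      HasDerivAt (fun ε : ℝ => evalQ (K1 (u + ε • sigma0 u)) n) d₁ 0 ∧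
      HasDerivAt (fun ε : ℝ => evalQ (sigma0 (u + ε • K1 u)) n) d₂ 0 ∧
      d₁ - d₂ = evalQ (K1 u) n := by
  refine ⟨_, _, hasDerivAt_evalQ_K1 u (sigma0 u) n, hasDerivAt_evalQ_sigma0 u (K1 u) n, ?_⟩
  rw [← evalQ_sub, K1Deriv_sigma0_sub_sigma0_K1]
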